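/- Let H be a group containing elements c1, c2, d, and for i = 1,2 and indices k elements f_i^(k), g_i^(k), satisfying all relations R1^(r) and R2^(r) of the presentation K_r (r ≥ 4) from Theorem 1.1. Then in the abelianization H1 = H/[H,H], the image of d is trivial. Consequently, the abelianization of K_r is free abelian of rank 4r − 2, generated by the images of c1, c2 and f_i^(k), g_i^(k) (i = 1,2, k = 2,…,r); in particular the first Betti number of K_r is 4r − 2. -/

import Mathlib

open scoped commutatorElement


/-- Generators of the presentation `K_r`: `c i`, `d`, and `f i k`, `g i k`, where
`k : Fin (r-1)` corresponds to the superscript `k+2 ∈ {2,…,r}`. -/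
inductive KGen (r : ℕ) where
  | c (i : Fin 2)
  | d
  | f (i : Fin 2) (k : Fin (r - 1))
  | g (i : Fin 2) (k : Fin (r - 1))

/-- The relations `R₁⁽ʳ⁾ ∪ R₂⁽ʳ⁾` of the presentation `K_r` from Theorem 1.1. -/
def Krels (r : ℕ) (hr : 4 ≤ r) : Set (FreeGroup (KGen r)) :=
  let x : KGen r → FreeGroup (KGen r) := FreeGroup.of
  let d2 : Fin 2 → FreeGroup (KGen r) := fun i => if i = 0 then (x .d)⁻¹ else x .d
  let V : Fin 2 → Fin 2 → FreeGroup (KGen r) := fun i j => if i = j then 1 else d2 i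
  let k0 : Fin (r - 1) := ⟨0, by omega⟩
  let kr : Fin (r - 1) := ⟨r - 2, by omega⟩
  let W : Fin 2 → Fin 2 → FreeGroup (KGen r) := fun i j =>
    if i = j then ⁅x (.f i k0), (x (.c i))⁻¹⁆
    else x (.f i k0) * (x (.c j))⁻¹ * (x (.f i k0))⁻¹ * d2 i * x (.c j)
  let S : Fin (r - 1) → FreeGroup (KGen r) := fun k =>
    (x (.f 0 k))⁻¹ * (x (.f 1 k))⁻¹ * x .d * x (.f 0 k) * x (.f 1 k)
  let T : Fin (r - 1) → FreeGroup (KGen r) := fun k =>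
    (x (.c 0) * x (.g 0 k))⁻¹ * (x (.c 1) * x (.g 1 k))⁻¹ * x .d *
      (x (.c 0) * x (.g 0 k)) * (x (.c 1) * x (.g 1 k))
  { w | ∃ (i j : Fin 2) (ε : ℤ) (k l : Fin (r - 1)), (ε = 1 ∨ ε = -1) ∧ k ≠ l ∧
      (w = (x (.f i k)) ^ ε * x (.c j) * (x (.f i k)) ^ (-ε) *
             (x (.f i l)) ^ ε * (x (.c j))⁻¹ * (x (.f i l)) ^ (-ε) ∨
       w = (x (.f i k)) ^ ε * x .d * (x (.f i k)) ^ (-ε) *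
             (x (.f i l)) ^ ε * (x .d)⁻¹ * (x (.f i l)) ^ (-ε) ∨
       w = ⁅x (.c i), x (.g j k)⁆ * ⁅(x (.c j))⁻¹ * x (.f j k), x (.c i)⁆ ∨
       w = ⁅x (.f i k), x (.f j l)⁆ * (V i j)⁻¹ ∨
       w = ⁅x (.f i k), x (.g j l)⁆ * (W i j)⁻¹ ∨
       w = ⁅x (.c i) * x (.g i k), x (.c j) * x (.g j l)⁆ * (V i j)⁻¹ ∨
       w = (x .d)⁻¹ * (x (.c 0))⁻¹ * x (.f 0 k) * (x (.c 1))⁻¹ * (x (.f 0 k))⁻¹ *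
             (x .d)⁻¹ * x (.f 1 k) * x (.c 0) * (x (.f 1 k))⁻¹ * x (.c 1) ∨
       w = S k * T k) } ∪
  { ⁅⁅x (.f 0 kr), x (.f 1 kr)⁆, x .d⁆ }

/-- The group `K_r` of Theorem 1.1 (`r ≥ 4`). -/
def Kr (r : ℕ) (hr : 4 ≤ r) := PresentedGroup (Krels r hr)

instance (r : ℕ) (hr : 4 ≤ r) : Group (Kr r hr) := by unfold Kr; infer_instance

/-!
The relator `⁅f₁⁽²⁾, f₂⁽³⁾⁆ d` exhibits `d` as a commutator, so `d` dies in every abelian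
quotient of `K_r`. Conversely, every relator is a product of commutators and copies of `d^{±1}`,
so sending `d` to `0` and the remaining `4r - 2` generators to a basis of `ℤ^{4r-2}` respects
the relations, and it is inverted by sending the basis back to those generators.
-/

namespace PresentedGroup

variable {α β : Type*} {rels : Set (FreeGroup α)}

noncomputable def freeAbelianGroupToAbelianization (j : β → α) :
    Multiplicative (FreeAbelianGroup β) →* Abelianization (PresentedGroup rels) :=
  AddMonoidHom.toMultiplicativeLeft <|
    FreeAbelianGroup.lift fun b => Additive.ofMul (Abelianization.of (.of (j b)))

@[simp]
lemma freeAbelianGroupToAbelianization_of (j : β → α) (b : β) :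
    freeAbelianGroupToAbelianization (rels := rels) j (.ofAdd (.of b)) =
      Abelianization.of (.of (j b)) := by
  simp [freeAbelianGroupToAbelianization]

/-- `p` rewrites each generator, in the abelianization, as a word in the generators `j b`. -/
noncomputable def abelianizationEquivFreeAbelianGroup (j : β → α) (p : α → FreeAbelianGroup β)
    (hp : ∀ b, p (j b) = .of b)
    (hrels : ∀ w ∈ rels, FreeGroup.lift (fun a => Multiplicative.ofAdd (p a)) w = 1)
    (hgen : ∀ a, freeAbelianGroupToAbelianization j (.ofAdd (p a)) =
      Abelianization.of (PresentedGroup.of (rels := rels) a)) :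
    Abelianization (PresentedGroup rels) ≃* Multiplicative (FreeAbelianGroup β) :=
  MonoidHom.toMulEquiv (Abelianization.lift (toGroup hrels)) (freeAbelianGroupToAbelianization j)
    (Abelianization.hom_ext _ _ <| ext fun a => by simp [hgen])
    (by ext; simp [hp])

end PresentedGroup

noncomputable def FreeAbelianGroup.addEquivFinPi {ι : Type*} [Fintype ι] {n : ℕ}
    (h : Fintype.card ι = n) : FreeAbelianGroup ι ≃+ (Fin n → ℤ) :=
  (equivOfEquiv (Fintype.equivFinOfCardEq h)).trans <|
    (equivFinsupp _).trans (Finsupp.linearEquivFunOnFinite ℤ ℤ _).toAddEquiv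

variable {r : ℕ}

lemma Krels_lift_eq_one (hr : 4 ≤ r) {G : Type*} [CommGroup G] (e : KGen r → G)
    (he : e .d = 1) {w : FreeGroup (KGen r)} (hw : w ∈ Krels r hr) : FreeGroup.lift e w = 1 := by
  rw [← ofMul_eq_zero]
  rcases hw with ⟨i, j, ε, k, l, hε, -, hw | hw | hw | hw | hw | hw | hw | hw⟩ | hw
  all_goals
    (try rw [Set.mem_singleton_iff] at hw); subst hw
    (try rcases hε with rfl | rfl)
    all_goals
      simp only [commutatorElement_def, map_mul, map_inv, FreeGroup.lift_apply_of,
        zpow_one, zpow_neg_one, neg_neg]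
      (try split_ifs) <;>
        simp only [map_mul, map_inv, map_one, FreeGroup.lift_apply_of, he, ofMul_mul, ofMul_inv,
          ofMul_one] <;>
        abel

/-- This is the relator `⁅f₁⁽ᵏ⁾, f₂⁽ˡ⁾⁆ V₁₂⁻¹`, as `V₁₂ = d⁻¹`. -/
lemma commutator_mul_d_mem_Krels (hr : 4 ≤ r) {k l : Fin (r - 1)} (hkl : k ≠ l) :
    ⁅FreeGroup.of (KGen.f 0 k), FreeGroup.of (KGen.f 1 l)⁆ * FreeGroup.of .d ∈ Krels r hr :=
  .inl ⟨0, 1, 1, k, l, .inl rfl, hkl, .inr <| .inr <| .inr <| .inl <| by simp⟩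

lemma Kr.map_d_eq_one (hr : 4 ≤ r) {A : Type*} [CommGroup A] (ψ : Kr r hr →* A) :
    ψ (PresentedGroup.of .d) = 1 := by
  let k : Fin (r - 1) := ⟨0, by omega⟩
  let l : Fin (r - 1) := ⟨1, by omega⟩
  let χ : FreeGroup (KGen r) →* A := ψ.comp (PresentedGroup.mk (Krels r hr))
  have hkl : k ≠ l := by simp [k, l]
  have hrel : χ (⁅FreeGroup.of (KGen.f 0 k), FreeGroup.of (KGen.f 1 l)⁆ * FreeGroup.of .d) = 1 :=
    (congrArg ψ (PresentedGroup.one_of_mem (commutator_mul_d_mem_Krels hr hkl))).trans (map_one ψ)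
  rwa [map_mul, map_commutatorElement,
    commutatorElement_eq_one_iff_mul_comm.mpr (mul_comm _ _), one_mul] at hrel

abbrev KBasis (r : ℕ) := Fin 2 ⊕ (Fin 2 × Fin (r - 1)) ⊕ (Fin 2 × Fin (r - 1))

lemma KBasis.card (hr : 4 ≤ r) : Fintype.card (KBasis r) = 4 * r - 2 := by
  simp only [Fintype.card_sum, Fintype.card_prod, Fintype.card_fin]
  omega

def KBasis.toGen : KBasis r → KGen r
  | .inl i => .c i
  | .inr (.inl (i, k)) => .f i k
  | .inr (.inr (i, k)) => .g i k

def KGen.toFreeAbelianGroup : KGen r → FreeAbelianGroup (KBasis r)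
  | .c i => .of (.inl i)
  | .d => 0
  | .f i k => .of (.inr (.inl (i, k)))
  | .g i k => .of (.inr (.inr (i, k)))

noncomputable def Kr.abelianizationEquiv (hr : 4 ≤ r) :
    Abelianization (Kr r hr) ≃* Multiplicative (FreeAbelianGroup (KBasis r)) :=
  PresentedGroup.abelianizationEquivFreeAbelianGroup KBasis.toGen KGen.toFreeAbelianGroup
    (by rintro (_ | _ | _) <;> rfl)
    (fun _ hw => Krels_lift_eq_one hr _ rfl hw)
    (by
      rintro (_ | _ | _ | _)
      · rfl
      · exact (map_one _).trans (Kr.map_d_eq_one hr Abelianization.of).symm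
      all_goals exact PresentedGroup.freeAbelianGroupToAbelianization_of _ _)

theorem stmt14 (r : ℕ) (hr : 4 ≤ r) :
    (∀ (A : Type) [CommGroup A] (ψ : Kr r hr →* A), ψ (PresentedGroup.of KGen.d) = 1) ∧
    Nonempty (Abelianization (Kr r hr) ≃* Multiplicative (Fin (4 * r - 2) → ℤ)) :=
  ⟨fun _ _ ψ => Kr.map_d_eq_one hr ψ,
    ⟨(Kr.abelianizationEquiv hr).trans
      (AddEquiv.toMultiplicative (FreeAbelianGroup.addEquivFinPi (KBasis.card hr)))⟩⟩
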